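/- arXiv:2306.09141 — 8 statements merged into one kernel-verified Lean document; each statement's English description precedes it below -/
import Mathlib

section
/- Let X be the inverse limit of a cofiltered system of spectral spaces with spectral transition maps. Then every pro-constructible subset Z of X satisfies Z = ⋂_{i ∈ ι} pr_i⁻¹(pr_i(Z)), i.e. a point x ∈ X lies in Z if and only if for every index i there exists z ∈ Z with pr_i(z) = pr_i(x). -/
/-- A topological space is spectral if it is quasi-compact, T0, quasi-sober, its
quasi-compact open subsets form a basis, and the intersection of two quasi-compact
open subsets is quasi-compact. -/
def IsSpectralSpace (α : Type*) [TopologicalSpace α] : Prop :=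
  CompactSpace α ∧ T0Space α ∧ QuasiSober α ∧
    TopologicalSpace.IsTopologicalBasis {U : Set α | IsCompact U ∧ IsOpen U} ∧
    ∀ U V : Set α, IsCompact U → IsOpen U → IsCompact V → IsOpen V → IsCompact (U ∩ V)

/-- A subset of a topological space is constructible if it lies in the Boolean algebra
of subsets generated by the quasi-compact open subsets. -/
inductive IsConstructibleSet {α : Type*} [TopologicalSpace α] : Set α → Prop
  | qcOpen : ∀ U : Set α, IsCompact U → IsOpen U → IsConstructibleSet U
  | compl : ∀ s : Set α, IsConstructibleSet s → IsConstructibleSet sᶜ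
  | union : ∀ s t : Set α, IsConstructibleSet s → IsConstructibleSet t →
      IsConstructibleSet (s ∪ t)

/-- A subset is pro-constructible if it is an intersection of a family of
constructible subsets. -/
def IsProconstructibleSet {α : Type*} [TopologicalSpace α] (s : Set α) : Prop :=
  ∃ S : Set (Set α), (∀ t ∈ S, IsConstructibleSet t) ∧ s = ⋂₀ S

/-- The inverse limit of an inverse system of topological spaces, with the subspace
topology of the product topology. -/
abbrev InvLim {ι : Type*} [Preorder ι] (X : ι → Type*) [∀ i, TopologicalSpace (X i)]
    (f : ∀ i j, i ≤ j → X j → X i) : Type _ :=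
  {x : ∀ i, X i // ∀ i j (h : i ≤ j), f i j h (x j) = x i}

open Set Filter TopologicalSpace Topology

/-- The subbasis for the patch (constructible) topology: quasi-compact open sets and
their complements. -/
def patchGen (α : Type*) [TopologicalSpace α] : Set (Set α) :=
  {s | (IsCompact s ∧ IsOpen s) ∨ ∃ U : Set α, IsCompact U ∧ IsOpen U ∧ s = Uᶜ}

/-- The patch (constructible) topology. -/
def patch (α : Type*) [TopologicalSpace α] : TopologicalSpace α :=
  TopologicalSpace.generateFrom (patchGen α)

theorem patch_isOpen_of_qcOpen {α : Type*} [TopologicalSpace α] {U : Set α}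
    (hc : IsCompact U) (ho : IsOpen U) : @IsOpen α (patch α) U :=
  isOpen_generateFrom_of_mem (Or.inl ⟨hc, ho⟩)

theorem patch_isClosed_of_qcOpen {α : Type*} [TopologicalSpace α] {U : Set α}
    (hc : IsCompact U) (ho : IsOpen U) : @IsClosed α (patch α) U :=
  @IsClosed.mk α (patch α) U (isOpen_generateFrom_of_mem (Or.inr ⟨U, hc, ho, rfl⟩))

/-- A spectral space is compact in the patch topology (Hochster). -/
theorem patch_compactSpace {α : Type*} [TopologicalSpace α] (h : IsSpectralSpace α) :
    @CompactSpace α (patch α) := by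
  obtain ⟨hcs, -, hsob, hbasis, hinter⟩ := h
  refine @CompactSpace.mk α (patch α) ?_
  rw [@isCompact_iff_ultrafilter_le_nhds α (patch α) Set.univ]
  intro F _
  classical
  set S : Set (Set α) := {U | (IsCompact U ∧ IsOpen U) ∧ U ∉ F} with hS
  set C : Set α := (⋃₀ S)ᶜ with hC
  have key : ∀ V : Set α, IsCompact V → IsOpen V → ((V ∩ C).Nonempty ↔ V ∈ F) := by
    intro V hVc hVo
    constructor
    · rintro ⟨a, haV, haC⟩
      by_contra hVF
      exact haC ⟨V, ⟨⟨hVc, hVo⟩, hVF⟩, haV⟩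
    · intro hVF
      by_contra hne
      rw [Set.not_nonempty_iff_eq_empty] at hne
      have hsub : V ⊆ ⋃ U : S, (U : Set α) := by
        rw [← Set.sUnion_eq_iUnion]
        intro a ha
        by_contra h'
        exact (Set.eq_empty_iff_forall_notMem.mp hne a) ⟨ha, h'⟩
      obtain ⟨t, ht⟩ := hVc.elim_finite_subcover (fun U : S => (U : Set α))
        (fun U => U.2.1.2) hsub
      have hmem : (⋃ U ∈ (t : Set S), (U : Set α)) ∈ F := by
        refine F.toFilter.mem_of_superset hVF ?_
        simpa using ht
      obtain ⟨U, -, hU⟩ := (Ultrafilter.finite_biUnion_mem_iff t.finite_toSet).mp hmem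
      exact U.2.2 hU
  have hCne : C.Nonempty := by
    have := (key Set.univ hcs.isCompact_univ isOpen_univ).mpr Filter.univ_mem
    simpa using this
  have hCcl : IsClosed C := (isOpen_sUnion fun U hU => hU.1.2).isClosed_compl
  have hirr : IsIrreducible C := by
    refine ⟨hCne, fun u v hu hv ⟨a, haC, hau⟩ ⟨b, hbC, hbv⟩ => ?_⟩
    obtain ⟨U, hU, haU, hUu⟩ := hbasis.exists_subset_of_mem_open hau hu
    obtain ⟨V, hV, hbV, hVv⟩ := hbasis.exists_subset_of_mem_open hbv hv
    have hUF : U ∈ F := (key U hU.1 hU.2).mp ⟨a, haU, haC⟩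
    have hVF : V ∈ F := (key V hV.1 hV.2).mp ⟨b, hbV, hbC⟩
    have hUVF : U ∩ V ∈ F := Filter.inter_mem hUF hVF
    obtain ⟨c, hcUV, hcC⟩ :=
      (key (U ∩ V) (hinter U V hU.1 hU.2 hV.1 hV.2) (hU.2.inter hV.2)).mpr hUVF
    exact ⟨c, hcC, hUu hcUV.1, hVv hcUV.2⟩
  obtain ⟨x, hx⟩ := hsob.sober hirr hCcl
  have hxC : x ∈ C := hx ▸ subset_closure (Set.mem_singleton x)
  refine ⟨x, trivial, ?_⟩
  have hnhds : @nhds α (patch α) x = ⨅ s ∈ {s | x ∈ s ∧ s ∈ patchGen α}, Filter.principal s :=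
    nhds_generateFrom
  rw [hnhds, le_iInf₂_iff]
  rintro s ⟨hxs, hsg⟩
  rw [Filter.le_principal_iff]
  rcases hsg with ⟨hsc, hso⟩ | ⟨U, hUc, hUo, rfl⟩
  · exact (key s hsc hso).mp ⟨x, hxs, hxC⟩
  · rw [Ultrafilter.mem_coe, Ultrafilter.compl_mem_iff_notMem]
    intro hUF
    obtain ⟨y, hyU, hyC⟩ := (key U hUc hUo).mpr hUF
    have hycl : y ∈ closure {x} := hx ▸ hyC
    obtain ⟨z, hzU, hzx⟩ := mem_closure_iff.mp hycl U hUo hyU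
    exact hxs (hzx ▸ hzU)

/-- A spectral space is Hausdorff in the patch topology. -/
theorem patch_t2Space {α : Type*} [TopologicalSpace α] (h : IsSpectralSpace α) :
    @T2Space α (patch α) := by
  obtain ⟨-, ht0, -, hbasis, -⟩ := h
  refine @T2Space.mk α (patch α) fun x y hxy => ?_
  have hnins : ¬Inseparable x y := fun hins => hxy hins.eq
  rw [inseparable_iff_forall_isOpen] at hnins
  push_neg at hnins
  obtain ⟨s, hs, hmem⟩ := hnins
  have hsep : ∃ U : Set α, (IsCompact U ∧ IsOpen U) ∧
      ((x ∈ U ∧ y ∉ U) ∨ (y ∈ U ∧ x ∉ U)) := by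
    rcases hmem with ⟨hxs, hys⟩ | ⟨hxs, hys⟩
    · obtain ⟨U, hU, hxU, hUs⟩ := hbasis.exists_subset_of_mem_open hxs hs
      exact ⟨U, hU, Or.inl ⟨hxU, fun hyU => hys (hUs hyU)⟩⟩
    · obtain ⟨U, hU, hyU, hUs⟩ := hbasis.exists_subset_of_mem_open hys hs
      exact ⟨U, hU, Or.inr ⟨hyU, fun hxU => hxs (hUs hxU)⟩⟩
  obtain ⟨U, hU, hcase⟩ := hsep
  have hUo : @IsOpen α (patch α) U := patch_isOpen_of_qcOpen hU.1 hU.2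
  have hUco : @IsOpen α (patch α) Uᶜ := (patch_isClosed_of_qcOpen hU.1 hU.2).isOpen_compl
  rcases hcase with ⟨hxU, hyU⟩ | ⟨hyU, hxU⟩
  · exact ⟨U, Uᶜ, hUo, hUco, hxU, hyU, disjoint_compl_right⟩
  · exact ⟨Uᶜ, U, hUco, hUo, hxU, hyU, disjoint_compl_left⟩

/-- Spectral maps are continuous for the patch topologies. -/
theorem patch_continuous {α β : Type*} [TopologicalSpace α] [TopologicalSpace β]
    {g : α → β} (hg : IsSpectralMap g) : Continuous[patch α, patch β] g := by
  rw [show patch β = TopologicalSpace.generateFrom (patchGen β) from rfl,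
    continuous_generateFrom_iff]
  rintro s (⟨hsc, hso⟩ | ⟨U, hUc, hUo, rfl⟩)
  · exact patch_isOpen_of_qcOpen (hg.isCompact_preimage_of_isOpen hso hsc)
      (hso.preimage hg.continuous)
  · rw [Set.preimage_compl]
    exact (patch_isClosed_of_qcOpen (hg.isCompact_preimage_of_isOpen hUo hUc)
      (hUo.preimage hg.continuous)).isOpen_compl

theorem clopen_compl {α : Type*} [TopologicalSpace α] {s : Set α}
    (h : IsClosed s ∧ IsOpen s) : IsClosed sᶜ ∧ IsOpen sᶜ :=
  ⟨h.2.isClosed_compl, h.1.isOpen_compl⟩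

theorem clopen_union {α : Type*} [TopologicalSpace α] {s t : Set α}
    (hs : IsClosed s ∧ IsOpen s) (ht : IsClosed t ∧ IsOpen t) :
    IsClosed (s ∪ t) ∧ IsOpen (s ∪ t) :=
  ⟨hs.1.union ht.1, hs.2.union ht.2⟩

theorem closed_sInter' {α : Type*} [TopologicalSpace α] {S : Set (Set α)}
    (h : ∀ t ∈ S, IsClosed t ∧ IsOpen t) : IsClosed (⋂₀ S) :=
  isClosed_sInter fun t ht => (h t ht).1

/-- A finite union of preimages of clopen subsets under the projections is clopen. -/
theorem clopen_aux {ι : Type*} [Preorder ι] (X : ι → Type*) [∀ i, TopologicalSpace (X i)]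
    (f : ∀ i j, i ≤ j → X j → X i)
    (t : Finset ((i : ι) × Set (X i)))
    (ht : ∀ p ∈ t, IsClosed p.2 ∧ IsOpen p.2) :
    IsClosed (⋃ p ∈ t, (fun y : InvLim X f => y.1 p.1) ⁻¹' p.2) ∧
      IsOpen (⋃ p ∈ t, (fun y : InvLim X f => y.1 p.1) ⁻¹' p.2) := by
  have hc : ∀ i, Continuous fun y : InvLim X f => y.1 i := fun i =>
    (continuous_apply i).comp continuous_subtype_val
  exact ⟨t.finite_toSet.isClosed_biUnion fun p hp => ((ht p hp).1).preimage (hc p.1),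
    isOpen_biUnion fun p hp => ((ht p hp).2).preimage (hc p.1)⟩

/-- In an inverse limit of compact Hausdorff spaces over a directed index set, a closed
set `Z` contains any point all of whose projections are projections of points of `Z`. -/
theorem main_aux {ι : Type*} [PartialOrder ι] [IsDirected ι (· ≤ ·)] [Nonempty ι]
    (X : ι → Type*) [∀ i, TopologicalSpace (X i)]
    [∀ i, CompactSpace (X i)] [∀ i, T2Space (X i)]
    (f : ∀ i j, i ≤ j → X j → X i)
    (hf_cont : ∀ i j (h : i ≤ j), Continuous (f i j h))
    (Z : Set (InvLim X f)) (hZc : IsClosed Z)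
    (x : InvLim X f) (hx : ∀ i, ∃ z ∈ Z, z.1 i = x.1 i) : x ∈ Z := by
  haveI : CompactSpace (InvLim X f) := by
    have heq : {y : ∀ i, X i | ∀ i j (h : i ≤ j), f i j h (y j) = y i} =
        ⋂ (i) (j) (h : i ≤ j), {y : ∀ i, X i | f i j h (y j) = y i} := by
      ext w
      simp only [Set.mem_setOf_eq, Set.mem_iInter]
    have hcl : IsClosed {y : ∀ i, X i | ∀ i j (h : i ≤ j), f i j h (y j) = y i} := by
      rw [heq]
      exact isClosed_iInter fun i => isClosed_iInter fun j => isClosed_iInter fun hij =>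
        isClosed_eq ((hf_cont i j hij).comp (continuous_apply j)) (continuous_apply i)
    exact isCompact_iff_compactSpace.mp hcl.isCompact
  have hprc : ∀ i, Continuous fun y : InvLim X f => y.1 i := fun i =>
    (continuous_apply i).comp continuous_subtype_val
  set T : ι → Set (InvLim X f) :=
    fun i => Z ∩ (fun y : InvLim X f => y.1 i) ⁻¹' {x.1 i} with hT
  have hTne : ∀ i, (T i).Nonempty := by
    intro i
    obtain ⟨z, hzZ, hz⟩ := hx i
    exact ⟨z, hzZ, hz⟩
  have hTcl : ∀ i, IsClosed (T i) := fun i =>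
    hZc.inter (isClosed_singleton.preimage (hprc i))
  have hTdir : Directed (· ⊇ ·) T := by
    intro i j
    obtain ⟨k, hik, hjk⟩ := directed_of (· ≤ ·) i j
    refine ⟨k, fun y hy => ?_, fun y hy => ?_⟩ <;>
    · simp only [hT, Set.mem_inter_iff, Set.mem_preimage, Set.mem_singleton_iff] at hy ⊢
      obtain ⟨hyZ, hyk⟩ := hy
      refine ⟨hyZ, ?_⟩
      first
        | rw [← y.2 i k hik, ← x.2 i k hik, hyk]
        | rw [← y.2 j k hjk, ← x.2 j k hjk, hyk]
  obtain ⟨y, hy⟩ := IsCompact.nonempty_iInter_of_directed_nonempty_isCompact_isClosed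
    T hTdir hTne (fun i => (hTcl i).isCompact) hTcl
  rw [Set.mem_iInter] at hy
  have hyx : y = x := Subtype.ext (funext fun i => (hy i).2)
  rw [← hyx]
  exact (hy (Classical.arbitrary ι)).1

/-- Let `X` be the inverse limit of a cofiltered system of spectral spaces with spectral
transition maps. Then every pro-constructible subset `Z` of `X` satisfies
`Z = ⋂ i, pr i ⁻¹' (pr i '' Z)`. -/
theorem statement0
    {ι : Type*} [PartialOrder ι] [IsDirected ι (· ≤ ·)] [Nonempty ι]
    (X : ι → Type*) [∀ i, TopologicalSpace (X i)]
    (f : ∀ i j, i ≤ j → X j → X i)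
    (hf_id : ∀ i (x : X i), f i i le_rfl x = x)
    (hf_comp : ∀ i j k (hij : i ≤ j) (hjk : j ≤ k) (x : X k),
      f i j hij (f j k hjk x) = f i k (hij.trans hjk) x)
    (hX : ∀ i, IsSpectralSpace (X i))
    (hf_spec : ∀ i j (h : i ≤ j), IsSpectralMap (f i j h))
    (Z : Set (InvLim X f))
    (hZ : IsProconstructibleSet Z) :
    Z = ⋂ i, (fun x : InvLim X f => x.1 i) ⁻¹' ((fun x : InvLim X f => x.1 i) '' Z) := by
  classical
  refine Set.Subset.antisymm
    (fun z hz => Set.mem_iInter.mpr fun i => ⟨z, hz, rfl⟩) ?_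
  intro x hx
  rw [Set.mem_iInter] at hx
  -- every quasi-compact open of the limit is a finite union of preimages of
  -- quasi-compact opens of the factors
  have hbase : ∀ s : Set (InvLim X f), IsCompact s → IsOpen s →
      ∃ t : Finset ((i : ι) × Set (X i)), (∀ p ∈ t, IsCompact p.2 ∧ IsOpen p.2) ∧
        s = ⋃ p ∈ t, (fun y : InvLim X f => y.1 p.1) ⁻¹' p.2 := by
    intro s hsc hso
    have hpt : ∀ y : InvLim X f, y ∈ s → ∃ p : (i : ι) × Set (X i),
        (IsCompact p.2 ∧ IsOpen p.2) ∧
        y ∈ (fun z : InvLim X f => z.1 p.1) ⁻¹' p.2 ∧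
        (fun z : InvLim X f => z.1 p.1) ⁻¹' p.2 ⊆ s := by
      intro y hy
      obtain ⟨s', hs'o, hs'⟩ := isOpen_induced_iff.mp hso
      have hy' : y.1 ∈ s' := by rw [← hs'] at hy; exact hy
      obtain ⟨I, u, hI, hsub⟩ := isOpen_pi_iff.mp hs'o y.1 hy'
      obtain ⟨j, hj⟩ := I.exists_le
      set V : Set (X j) := ⋂ i ∈ I.attach, f i j (hj i i.2) ⁻¹' u i with hV
      have hVo : IsOpen V := isOpen_biInter_finset fun i _ =>
        (hI i i.2).1.preimage (hf_spec i j (hj i i.2)).continuous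
      have hyV : y.1 j ∈ V := by
        rw [hV, Set.mem_iInter₂]
        intro i _
        show f i j (hj i i.2) (y.1 j) ∈ u i
        rw [y.2 i j (hj i i.2)]
        exact (hI i i.2).2
      obtain ⟨U, hU, hyU, hUV⟩ := (hX j).2.2.2.1.exists_subset_of_mem_open hyV hVo
      refine ⟨⟨j, U⟩, hU, hyU, ?_⟩
      intro w hw
      have hw' : w.1 ∈ (I : Set ι).pi u := by
        rw [Set.mem_pi]
        intro i hi
        have hwV : w.1 j ∈ V := hUV hw
        rw [hV, Set.mem_iInter₂] at hwV
        have := hwV ⟨i, hi⟩ (Finset.mem_attach _ _)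
        rw [← w.2 i j (hj i hi)]
        exact this
      show w ∈ s
      rw [← hs']
      exact hsub hw'
    choose p hp1 hp2 hp3 using hpt
    obtain ⟨t, ht⟩ := hsc.elim_finite_subcover
      (fun y : s => (fun z : InvLim X f => z.1 (p y.1 y.2).1) ⁻¹' (p y.1 y.2).2)
      (fun y => (hp1 y.1 y.2).2.preimage ((continuous_apply _).comp continuous_subtype_val))
      (fun y hy => Set.mem_iUnion.mpr ⟨⟨y, hy⟩, hp2 y hy⟩)
    refine ⟨t.image fun y => p y.1 y.2, ?_, ?_⟩
    · intro q hq
      obtain ⟨y, -, rfl⟩ := Finset.mem_image.mp hq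
      exact hp1 y.1 y.2
    · apply Set.Subset.antisymm
      · intro z hz
        obtain ⟨y, hyt, hzy⟩ := Set.mem_iUnion₂.mp (ht hz)
        exact Set.mem_iUnion₂.mpr ⟨p y.1 y.2, Finset.mem_image_of_mem _ hyt, hzy⟩
      · intro z hz
        obtain ⟨q, hq, hzq⟩ := Set.mem_iUnion₂.mp hz
        obtain ⟨y, -, rfl⟩ := Finset.mem_image.mp hq
        exact hp3 y.1 y.2 hzq
  obtain ⟨S, hScon, hZS⟩ := hZ
  refine @main_aux ι _ _ _ X (fun i => patch (X i)) (fun i => patch_compactSpace (hX i))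
    (fun i => patch_t2Space (hX i)) f (fun i j h => patch_continuous (hf_spec i j h)) Z ?_ x
    (fun i => by obtain ⟨z, hz, hzi⟩ := hx i; exact ⟨z, hz, hzi⟩)
  rw [hZS]
  refine @closed_sInter' (InvLim X f) (@instTopologicalSpaceSubtype (∀ i, X i) (fun x : ∀ i, X i => ∀ i j (h : i ≤ j), f i j h (x j) = x i) (@Pi.topologicalSpace ι X fun i => patch (X i))) S fun s hs => ?_
  have hcs := hScon s hs
  clear hs
  induction hcs with
  | qcOpen U hUc hUo =>
    obtain ⟨t, htq, rfl⟩ := hbase U hUc hUo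
    exact @clopen_aux ι _ X (fun i => patch (X i)) f t fun p hp =>
      ⟨patch_isClosed_of_qcOpen (htq p hp).1 (htq p hp).2,
        patch_isOpen_of_qcOpen (htq p hp).1 (htq p hp).2⟩
  | compl s _ ih => exact @clopen_compl (InvLim X f) (@instTopologicalSpaceSubtype (∀ i, X i) (fun x : ∀ i, X i => ∀ i j (h : i ≤ j), f i j h (x j) = x i) (@Pi.topologicalSpace ι X fun i => patch (X i))) _ ih
  | union s t _ _ ih1 ih2 => exact @clopen_union (InvLim X f) (@instTopologicalSpaceSubtype (∀ i, X i) (fun x : ∀ i, X i => ∀ i j (h : i ≤ j), f i j h (x j) = x i) (@Pi.topologicalSpace ι X fun i => patch (X i))) _ _ ih1 ih2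
end

section
/- Let X̄ be a spectral space, S ⊆ X̄ a pro-constructible subset, x ∈ X̄, and x₀ ∈ S a point such that x ∈ closure{x₀} and such that every y ∈ S with x ∈ closure{y} satisfies x₀ ∈ closure{y} (i.e. x₀ is a minimal generalization of x inside S). Then for every open subset U ⊆ X̄ with x₀ ∈ U there exists an open subset V ⊆ X̄ with x ∈ V and V ∩ S ⊆ U. -/
/-- Let `X̄` be a spectral space, `S` a pro-constructible subset, `x ∈ X̄`, and `x₀ ∈ S`
a minimal generalization of `x` inside `S`. Then every open `U` containing `x₀` admits
an open `V` containing `x` with `V ∩ S ⊆ U`. -/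
theorem statement3 {α : Type*} [TopologicalSpace α] (hα : IsSpectralSpace α)
    (S : Set α) (hS : IsProconstructibleSet S)
    (x x₀ : α) (hx₀S : x₀ ∈ S) (hx : x ∈ closure ({x₀} : Set α))
    (hmin : ∀ y ∈ S, x ∈ closure ({y} : Set α) → x₀ ∈ closure ({y} : Set α)) :
    ∀ U : Set α, IsOpen U → x₀ ∈ U → ∃ V : Set α, IsOpen V ∧ x ∈ V ∧ V ∩ S ⊆ U := by
  obtain ⟨hcs, _hT0, hsober, hbasis, hinter⟩ := hα
  intro U hU hx₀U
  by_contra hcon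
  push_neg at hcon
  -- `x` lies in the closure of `S ∩ Uᶜ`
  have hxcl : x ∈ closure (S ∩ Uᶜ) := by
    rw [mem_closure_iff]
    intro O hO hxO
    have h1 := hcon O hO hxO
    rw [Set.not_subset] at h1
    obtain ⟨y, hy, hyU⟩ := h1
    exact ⟨y, hy.1, hy.2, hyU⟩
  have hne : (nhds x ⊓ Filter.principal (S ∩ Uᶜ)).NeBot := mem_closure_iff_clusterPt.mp hxcl
  -- Take an ultrafilter refining it
  let F : Ultrafilter α := Ultrafilter.of (nhds x ⊓ Filter.principal (S ∩ Uᶜ))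
  have hle : (F : Filter α) ≤ nhds x ⊓ Filter.principal (S ∩ Uᶜ) := Ultrafilter.of_le _
  have hSU : S ∩ Uᶜ ∈ F := hle (Filter.mem_inf_of_right (Filter.mem_principal_self _))
  have hnx : ∀ W ∈ nhds x, W ∈ F := fun W h => hle (Filter.mem_inf_of_left h)
  -- The "patch cluster set" of F
  set B : Set (Set α) := {W | IsCompact W ∧ IsOpen W ∧ W ∉ F} with hB
  set C : Set α := (⋃₀ B)ᶜ with hC
  have hCclosed : IsClosed C := (isOpen_sUnion fun W hW => hW.2.1).isClosed_compl
  -- Key: a quasi-compact open is in F iff it meets C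
  have L1 : ∀ O : Set α, IsCompact O → IsOpen O → (O ∈ F ↔ (C ∩ O).Nonempty) := by
    intro O hOc hOo
    constructor
    · intro hOF
      by_contra h
      have hsub : O ⊆ ⋃₀ B := by
        intro y hy
        by_contra hy'
        exact h ⟨y, hy', hy⟩
      rw [Set.sUnion_eq_iUnion] at hsub
      obtain ⟨t, ht⟩ := hOc.elim_finite_subcover (fun W : B => (W : Set α))
        (fun W => W.2.2.1) hsub
      have hmem : (⋃ W ∈ t, (W : Set α)) ∈ F := Filter.mem_of_superset hOF ht
      have hmem' : (⋃ W ∈ (↑t : Set ↥B), (W : Set α)) ∈ F := by simpa using hmem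
      rw [Ultrafilter.finite_biUnion_mem_iff t.finite_toSet] at hmem'
      obtain ⟨W, _, hWF⟩ := hmem'
      exact W.2.2.2 hWF
    · rintro ⟨y, hyC, hyO⟩
      by_contra hOF
      exact hyC ⟨O, ⟨hOc, hOo, hOF⟩, hyO⟩
  -- C is nonempty and irreducible
  have hCne : C.Nonempty := by
    have := (L1 Set.univ hcs.isCompact_univ isOpen_univ).mp Filter.univ_mem
    exact this.mono (Set.inter_subset_left)
  have hirr : IsIrreducible C := by
    refine ⟨hCne, ?_⟩
    rintro u v hu hv ⟨y₁, hy₁C, hy₁u⟩ ⟨y₂, hy₂C, hy₂v⟩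
    obtain ⟨W₁, ⟨hW₁c, hW₁o⟩, hyW₁, hW₁sub⟩ := hbasis.exists_subset_of_mem_open hy₁u hu
    obtain ⟨W₂, ⟨hW₂c, hW₂o⟩, hyW₂, hW₂sub⟩ := hbasis.exists_subset_of_mem_open hy₂v hv
    have h₁ : W₁ ∈ F := (L1 W₁ hW₁c hW₁o).mpr ⟨y₁, hy₁C, hyW₁⟩
    have h₂ : W₂ ∈ F := (L1 W₂ hW₂c hW₂o).mpr ⟨y₂, hy₂C, hyW₂⟩
    have h₁₂ := (L1 (W₁ ∩ W₂) (hinter W₁ W₂ hW₁c hW₁o hW₂c hW₂o) (hW₁o.inter hW₂o)).mp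
      (Filter.inter_mem h₁ h₂)
    exact h₁₂.mono fun z hz => ⟨hz.1, hW₁sub hz.2.1, hW₂sub hz.2.2⟩
  -- generic point z of C
  obtain ⟨z, hz⟩ := hsober.sober hirr hCclosed
  have hzC : z ∈ C := hz.mem
  -- z belongs to a qc open iff it is in F
  have P1 : ∀ W : Set α, IsCompact W → IsOpen W → (z ∈ W ↔ W ∈ F) := by
    intro W hWc hWo
    constructor
    · intro hzW
      exact (L1 W hWc hWo).mpr ⟨z, hzC, hzW⟩
    · intro hWF
      obtain ⟨y, hyC, hyW⟩ := (L1 W hWc hWo).mp hWF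
      have : y ∈ closure ({z} : Set α) := hz ▸ hyC
      obtain ⟨w, hw1, hw2⟩ := mem_closure_iff.mp this W hWo hyW
      rwa [Set.mem_singleton_iff.mp hw2] at hw1
  -- z belongs to a constructible set iff it is in F
  have P2 : ∀ t : Set α, IsConstructibleSet t → (t ∈ F ↔ z ∈ t) := by
    intro t ht
    induction ht with
    | qcOpen W hc ho => exact (P1 W hc ho).symm
    | compl s _ ih => simp [Ultrafilter.compl_mem_iff_notMem, ih]
    | union s t _ _ ihs iht => simp [Ultrafilter.union_mem_iff, ihs, iht]
  -- z is in every closed set belonging to F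
  have P3 : ∀ D : Set α, IsClosed D → D ∈ F → z ∈ D := by
    intro D hD hDF
    by_contra hzD
    obtain ⟨W, ⟨hWc, hWo⟩, hzW, hWsub⟩ :=
      hbasis.exists_subset_of_mem_open (Set.mem_compl hzD) hD.isOpen_compl
    have hWF : W ∈ F := (P1 W hWc hWo).mp hzW
    have := Ultrafilter.nonempty_of_mem (Filter.inter_mem hWF hDF)
    obtain ⟨w, hw1, hw2⟩ := this
    exact hWsub hw1 hw2
  -- z ∈ S
  obtain ⟨T, hTcon, hSeq⟩ := hS
  have hSF : S ∈ F := Filter.mem_of_superset hSU Set.inter_subset_left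
  have hzS : z ∈ S := by
    rw [hSeq]
    intro t ht
    have htF : t ∈ F := Filter.mem_of_superset hSF (hSeq ▸ Set.sInter_subset_of_mem ht)
    exact (P2 t (hTcon t ht)).mp htF
  -- z ∈ Uᶜ
  have hzU : z ∈ Uᶜ := P3 Uᶜ hU.isClosed_compl (Filter.mem_of_superset hSU Set.inter_subset_right)
  -- x ∈ closure {z}
  have hxz : x ∈ closure ({z} : Set α) := by
    rw [mem_closure_iff]
    intro O hO hxO
    obtain ⟨W, ⟨hWc, hWo⟩, hxW, hWsub⟩ := hbasis.exists_subset_of_mem_open hxO hO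
    have hzW : z ∈ W := (P1 W hWc hWo).mpr (hnx W (hWo.mem_nhds hxW))
    exact ⟨z, hWsub hzW, rfl⟩
  -- contradiction
  have hx₀z := hmin z hzS hxz
  obtain ⟨w, hw1, hw2⟩ := mem_closure_iff.mp hx₀z U hU hx₀U
  rw [Set.mem_singleton_iff.mp hw2] at hw1
  exact hzU hw1
end

section
/- Let X be the inverse limit of a cofiltered system of spectral spaces with spectral transition maps, let Y be a spectral space, and let g : Y → X be a continuous map such that g is spectral (preimages of quasi-compact opens are quasi-compact) and such that for every index i the composite pr_i ∘ g : Y → X i is a closed map. Then g is a closed map. -/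
open TopologicalSpace Topology Set Filter

section Patch

variable {α β : Type*} [t : TopologicalSpace α] [tβ : TopologicalSpace β]

/-- The patch (constructible) topology associated to a topology. -/
def patchTop (α : Type*) [TopologicalSpace α] : TopologicalSpace α :=
  generateFrom {s : Set α |
    (IsCompact s ∧ IsOpen s) ∨ ∃ U : Set α, IsCompact U ∧ IsOpen U ∧ s = Uᶜ}

lemma patchTop_isOpen {U : Set α} (h1 : IsCompact U) (h2 : IsOpen U) :
    IsOpen[patchTop α] U :=
  isOpen_generateFrom_of_mem (Or.inl ⟨h1, h2⟩)

lemma patchTop_isOpen_compl {U : Set α} (h1 : IsCompact U) (h2 : IsOpen U) :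
    IsOpen[patchTop α] Uᶜ :=
  isOpen_generateFrom_of_mem (Or.inr ⟨U, h1, h2, rfl⟩)

lemma patchTop_le (hb : IsTopologicalBasis {U : Set α | IsCompact U ∧ IsOpen U}) :
    patchTop α ≤ t :=
  le_of_le_of_eq (generateFrom_anti fun _s hs => Or.inl hs) hb.eq_generateFrom.symm

lemma isClosed_patchTop_of_isClosed
    (hb : IsTopologicalBasis {U : Set α | IsCompact U ∧ IsOpen U})
    {C : Set α} (hC : IsClosed C) : IsClosed[patchTop α] C := by
  have h := hC.isOpen_compl.mono (patchTop_le hb)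
  letI := patchTop α
  exact isOpen_compl_iff.mp h

lemma patchTop_t2 (h0 : T0Space α)
    (hb : IsTopologicalBasis {U : Set α | IsCompact U ∧ IsOpen U}) :
    @T2Space α (patchTop α) := by
  haveI := h0
  have key : ∀ x y : α, x ≠ y → ∃ u v : Set α, IsOpen[patchTop α] u ∧ IsOpen[patchTop α] v ∧
      x ∈ u ∧ y ∈ v ∧ Disjoint u v := ?_
  · exact @T2Space.mk α (patchTop α) fun x y h => key x y h
  intro x y hxy
  obtain ⟨O, hO, hxor⟩ := exists_isOpen_xor'_mem hxy
  rcases hxor with ⟨hx, hy⟩ | ⟨hy, hx⟩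
  · obtain ⟨U, hU, hxU, hUO⟩ := hb.exists_subset_of_mem_open hx hO
    exact ⟨U, Uᶜ, patchTop_isOpen hU.1 hU.2, patchTop_isOpen_compl hU.1 hU.2,
      hxU, fun h => hy (hUO h), disjoint_compl_right⟩
  · obtain ⟨U, hU, hyU, hUO⟩ := hb.exists_subset_of_mem_open hy hO
    exact ⟨Uᶜ, U, patchTop_isOpen_compl hU.1 hU.2, patchTop_isOpen hU.1 hU.2,
      fun h => hx (hUO h), hyU, disjoint_compl_left⟩

lemma patchTop_continuous {φ : α → β} (h : IsSpectralMap φ) :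
    Continuous[patchTop α, patchTop β] φ := by
  unfold patchTop
  refine continuous_generateFrom_iff.mpr fun s hs => ?_
  rcases hs with ⟨hc, ho⟩ | ⟨U, hc, ho, rfl⟩
  · exact patchTop_isOpen (h.isCompact_preimage_of_isOpen ho hc) (ho.preimage h.continuous)
  · rw [Set.preimage_compl]
    exact patchTop_isOpen_compl (h.isCompact_preimage_of_isOpen ho hc) (ho.preimage h.continuous)

lemma patchTop_compactSpace (h : IsSpectralSpace α) : @CompactSpace α (patchTop α) := by
  obtain ⟨hcomp, h0, hsober, hb, hqc⟩ := h
  refine @CompactSpace.mk _ (patchTop α) ?_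
  rw [@isCompact_iff_ultrafilter_le_nhds _ (patchTop α)]
  intro 𝒰 _
  -- the union of all compact opens not in the ultrafilter
  set S : Set (Set α) := {U : Set α | (IsCompact U ∧ IsOpen U) ∧ U ∉ 𝒰} with hS
  set Z : Set α := (⋃₀ S)ᶜ with hZ
  have hZclosed : IsClosed Z := (isOpen_sUnion fun U hU => hU.1.2).isClosed_compl
  have key : ∀ U : Set α, IsCompact U → IsOpen U → U ∈ 𝒰 → ¬ U ⊆ ⋃₀ S := by
    intro U hUc hUo hUm hsub
    have hcover : U ⊆ ⋃ V : S, (V : Set α) := by rwa [← sUnion_eq_iUnion]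
    obtain ⟨T, hT⟩ := hUc.elim_finite_subcover (fun V : S => (V : Set α))
      (fun V => V.2.1.2) hcover
    have hmem : (⋃ V ∈ (↑T : Set ↥S), (V : Set α)) ∈ 𝒰 := by
      refine Filter.mem_of_superset hUm ?_
      simpa using hT
    obtain ⟨V, -, hV⟩ := (Ultrafilter.finite_biUnion_mem_iff T.finite_toSet).mp hmem
    exact V.2.2 hV
  have key2 : ∀ U : Set α, IsCompact U → IsOpen U → (U ∈ 𝒰 ↔ (U ∩ Z).Nonempty) := by
    intro U hUc hUo
    constructor
    · intro hUm
      rcases Set.not_subset.mp (key U hUc hUo hUm) with ⟨z, hzU, hzW⟩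
      exact ⟨z, hzU, hzW⟩
    · rintro ⟨z, hzU, hzZ⟩
      by_contra hUm
      exact hzZ (Set.subset_sUnion_of_mem (⟨⟨hUc, hUo⟩, hUm⟩ : U ∈ S) hzU)
  have hZne : Z.Nonempty := by
    by_contra hne
    rw [Set.not_nonempty_iff_eq_empty] at hne
    have : (univ : Set α) ⊆ ⋃₀ S := by
      intro z _
      by_contra hz
      exact (Set.eq_empty_iff_forall_notMem.mp hne z) hz
    exact key univ hcomp.isCompact_univ isOpen_univ Filter.univ_mem this
  have hZirr : IsIrreducible Z := by
    refine ⟨hZne, fun u v hu hv ⟨z1, hz1Z, hz1u⟩ ⟨z2, hz2Z, hz2v⟩ => ?_⟩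
    obtain ⟨U1, hU1, hzU1, hU1u⟩ := hb.exists_subset_of_mem_open hz1u hu
    obtain ⟨U2, hU2, hzU2, hU2v⟩ := hb.exists_subset_of_mem_open hz2v hv
    have h1 : U1 ∈ 𝒰 := (key2 U1 hU1.1 hU1.2).mpr ⟨z1, hzU1, hz1Z⟩
    have h2 : U2 ∈ 𝒰 := (key2 U2 hU2.1 hU2.2).mpr ⟨z2, hzU2, hz2Z⟩
    obtain ⟨w, hwU, hwZ⟩ := (key2 (U1 ∩ U2) (hqc U1 U2 hU1.1 hU1.2 hU2.1 hU2.2)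
      (hU1.2.inter hU2.2)).mp (Filter.inter_mem h1 h2)
    exact ⟨w, hwZ, hU1u hwU.1, hU2v hwU.2⟩
  obtain ⟨x, hx⟩ := hsober.sober hZirr hZclosed
  have hxZ : x ∈ Z := by
    have : x ∈ closure ({x} : Set α) := subset_closure rfl
    rwa [hx] at this
  have claim : ∀ U : Set α, IsCompact U → IsOpen U → (x ∈ U ↔ U ∈ 𝒰) := by
    intro U hUc hUo
    constructor
    · intro hxU
      exact (key2 U hUc hUo).mpr ⟨x, hxU, hxZ⟩
    · intro hUm
      obtain ⟨z, hzU, hzZ⟩ := (key2 U hUc hUo).mp hUm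
      rw [← hx] at hzZ
      obtain ⟨w, hw1, hw2⟩ := mem_closure_iff.mp hzZ U hUo hzU
      rwa [Set.mem_singleton_iff.mp hw2] at hw1
  refine ⟨x, Set.mem_univ x, ?_⟩
  unfold patchTop
  rw [nhds_generateFrom]
  refine le_iInf fun s => le_iInf fun hs => Filter.le_principal_iff.mpr ?_
  obtain ⟨hxs, hsgen⟩ := hs
  simp only [Set.mem_setOf_eq] at hsgen
  rcases hsgen with ⟨hc, ho⟩ | ⟨U, hc, ho, rfl⟩
  · exact (claim s hc ho).mp hxs
  · exact Ultrafilter.compl_mem_iff_notMem.mpr fun hUm => hxs ((claim U hc ho).mpr hUm)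

end Patch

lemma isCompact_of_le {α : Type*} {t₁ t₂ : TopologicalSpace α} (h : t₁ ≤ t₂) {s : Set α}
    (hs : @IsCompact α t₁ s) : @IsCompact α t₂ s := by
  intro l hl hls
  obtain ⟨a, has, hcl⟩ := hs hls
  refine ⟨a, has, ?_⟩
  have h2 : @nhds α t₁ a ⊓ l ≤ @nhds α t₂ a ⊓ l := inf_le_inf_right l (nhds_mono h)
  exact Filter.NeBot.mono hcl h2

/-- Key compactness lemma: the preimage in the inverse limit of a quasi-compact open
subset of a factor is quasi-compact. -/
lemma invLim_proj_isCompact {ι : Type*} [Preorder ι] {X : ι → Type*}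
    [tX : ∀ i, TopologicalSpace (X i)] (f : ∀ i j, i ≤ j → X j → X i)
    (hX : ∀ i, IsSpectralSpace (X i))
    (hf_spec : ∀ i j (h : i ≤ j), IsSpectralMap (f i j h))
    (i : ι) {U : Set (X i)} (hUc : IsCompact U) (hUo : IsOpen U) :
    IsCompact {z : InvLim X f | z.1 i ∈ U} := by
  -- facts about the patch topologies, computed w.r.t. the original instances
  have ht2 : ∀ j, @T2Space (X j) (patchTop (X j)) := fun j =>
    patchTop_t2 (hX j).2.1 (hX j).2.2.2.1
  have hcs : ∀ j, @CompactSpace (X j) (patchTop (X j)) := fun j =>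
    patchTop_compactSpace (hX j)
  have hctsf : ∀ a b (h : a ≤ b), Continuous[patchTop (X b), patchTop (X a)] (f a b h) :=
    fun a b h => patchTop_continuous (hf_spec a b h)
  have hUcl : IsClosed[patchTop (X i)] U := by
    have h' := patchTop_isOpen_compl hUc hUo
    letI := patchTop (X i)
    exact isOpen_compl_iff.mp h'
  have hle : ∀ j, patchTop (X j) ≤ tX j := fun j => patchTop_le (hX j).2.2.2.1
  -- now work with the patch topologies as instances
  have key : @IsCompact (InvLim X f)
      (@instTopologicalSpaceSubtype _ _ (@Pi.topologicalSpace ι X fun j => patchTop (X j)))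
      {z | z.1 i ∈ U} := by
    letI tP : ∀ j, TopologicalSpace (X j) := fun j => patchTop (X j)
    haveI : ∀ j, T2Space (X j) := ht2
    haveI : ∀ j, CompactSpace (X j) := hcs
    have hclosedL : IsClosed {p : ∀ j, X j | ∀ a b (h : a ≤ b), f a b h (p b) = p a} := by
      have heq : {p : ∀ j, X j | ∀ a b (h : a ≤ b), f a b h (p b) = p a} =
          ⋂ (a) (b) (h : a ≤ b), {p : ∀ j, X j | f a b h (p b) = p a} := by
        ext p; simp only [Set.mem_setOf_eq, Set.mem_iInter]
      rw [heq]
      refine isClosed_iInter fun a => isClosed_iInter fun b => isClosed_iInter fun h => ?_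
      exact isClosed_eq ((hctsf a b h).comp (continuous_apply b)) (continuous_apply a)
    haveI : CompactSpace (InvLim X f) :=
      isCompact_iff_compactSpace.mp hclosedL.isCompact
    have hcl : IsClosed {z : InvLim X f | z.1 i ∈ U} :=
      hUcl.preimage ((continuous_apply i).comp continuous_subtype_val)
    exact hcl.isCompact
  refine isCompact_of_le ?_ key
  refine induced_mono ?_
  exact iInf_mono fun j => induced_mono (hle j)

lemma exists_mem_iInter_patch {Y : Type*} [tY : TopologicalSpace Y] (hY : IsSpectralSpace Y)
    {ι : Type*} [Nonempty ι] (E : ι → Set Y) (hdir : Directed (· ⊇ ·) E)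
    (hne : ∀ i, (E i).Nonempty) (hcl : ∀ i, IsClosed[patchTop Y] (E i)) :
    (⋂ i, E i).Nonempty := by
  have hcomp : @CompactSpace Y (patchTop Y) := patchTop_compactSpace hY
  letI := patchTop Y
  haveI := hcomp
  exact IsCompact.nonempty_iInter_of_directed_nonempty_isCompact_isClosed E hdir hne
    (fun i => (hcl i).isCompact) hcl


/-- Let `X` be the inverse limit of a cofiltered system of spectral spaces with
spectral transition maps, `Y` a spectral space, and `g : Y → X` a spectral continuous
map such that `pr i ∘ g` is closed for every `i`. Then `g` is a closed map. -/
theorem statement4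
    {ι : Type*} [PartialOrder ι] [IsDirected ι (· ≤ ·)] [Nonempty ι]
    (X : ι → Type*) [∀ i, TopologicalSpace (X i)]
    (f : ∀ i j, i ≤ j → X j → X i)
    (hf_id : ∀ i (x : X i), f i i le_rfl x = x)
    (hf_comp : ∀ i j k (hij : i ≤ j) (hjk : j ≤ k) (x : X k),
      f i j hij (f j k hjk x) = f i k (hij.trans hjk) x)
    (hX : ∀ i, IsSpectralSpace (X i))
    (hf_spec : ∀ i j (h : i ≤ j), IsSpectralMap (f i j h))
    (Y : Type*) [TopologicalSpace Y] (hY : IsSpectralSpace Y)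
    (g : Y → InvLim X f)
    (hg : IsSpectralMap g)
    (hclosed : ∀ i, IsClosedMap (fun y : Y => (g y).1 i)) :
    IsClosedMap g := by

  intro C hC
  refine isClosed_of_closure_subset fun x hx => ?_
  -- the projections are continuous
  have hpr : ∀ i, Continuous fun z : InvLim X f => z.1 i := fun i =>
    (continuous_apply i).comp continuous_subtype_val
  -- Step 1: each coordinate of x is hit from C
  have hx_i : ∀ i, ∃ y ∈ C, (g y).1 i = x.1 i := by
    intro i
    have h2 : (fun z : InvLim X f => z.1 i) '' closure (g '' C) ⊆
        closure ((fun z : InvLim X f => z.1 i) '' (g '' C)) :=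
      image_closure_subset_closure_image (hpr i)
    have h3 := h2 ⟨x, hx, rfl⟩
    rw [Set.image_image] at h3
    rw [(hclosed i C hC).closure_eq] at h3
    obtain ⟨y, hyC, hy⟩ := h3
    exact ⟨y, hyC, hy⟩
  -- Step 2: pr_i ∘ g is a spectral map
  have hspec : ∀ i, IsSpectralMap (fun y : Y => (g y).1 i) := by
    intro i
    refine ⟨(hpr i).comp hg.continuous, fun U hUo hUc => ?_⟩
    have hq : IsCompact {z : InvLim X f | z.1 i ∈ U} :=
      invLim_proj_isCompact f hX hf_spec i hUc hUo
    have ho : IsOpen {z : InvLim X f | z.1 i ∈ U} := hUo.preimage (hpr i)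
    exact hg.isCompact_preimage_of_isOpen ho hq
  -- Step 3: the directed family of fibers
  set E : ι → Set Y := fun i => C ∩ (fun y : Y => (g y).1 i) ⁻¹' {x.1 i} with hE
  have hne : ∀ i, (E i).Nonempty := by
    intro i
    obtain ⟨y, hyC, hy⟩ := hx_i i
    exact ⟨y, hyC, hy⟩
  have hdir : Directed (· ⊇ ·) E := by
    intro i j
    obtain ⟨k, hik, hjk⟩ := directed_of (· ≤ ·) i j
    have hsub : ∀ a (hak : a ≤ k), E k ⊆ E a := by
      intro a hak y hy
      refine ⟨hy.1, ?_⟩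
      have h1 := (g y).2 a k hak
      have h2 := x.2 a k hak
      have h3 : (g y).1 k = x.1 k := hy.2
      simp only [Set.mem_preimage, Set.mem_singleton_iff]
      rw [← h1, h3, h2]
    exact ⟨k, hsub i hik, hsub j hjk⟩
  -- Step 4: each fiber is patch-closed
  have hcl : ∀ i, IsClosed[patchTop Y] (E i) := by
    intro i
    have h1 : IsClosed[patchTop Y] C := isClosed_patchTop_of_isClosed hY.2.2.2.1 hC
    have h2 : IsClosed[patchTop Y] ((fun y : Y => (g y).1 i) ⁻¹' {x.1 i}) := by
      have hcont : Continuous[patchTop Y, patchTop (X i)] (fun y : Y => (g y).1 i) :=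
        patchTop_continuous (hspec i)
      have hsingle : IsClosed[patchTop (X i)] {x.1 i} := by
        haveI := patchTop_t2 (hX i).2.1 (hX i).2.2.2.1
        letI := patchTop (X i)
        exact isClosed_singleton
      exact @IsClosed.preimage Y (X i) (patchTop Y) (patchTop (X i)) _ hcont _ hsingle
    letI := patchTop Y
    exact h1.inter h2
  -- Step 5: conclude
  obtain ⟨y, hy⟩ := exists_mem_iInter_patch hY E hdir hne hcl
  have hyC : y ∈ C := (Set.mem_iInter.mp hy (Classical.arbitrary ι)).1
  refine ⟨y, hyC, ?_⟩
  refine Subtype.ext (funext fun i => ?_)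
  exact (Set.mem_iInter.mp hy i).2
end

section
/- Let K be a field, ι a directed partially ordered set, and (k i)_{i ∈ ι} a monotone family of subfields of K (k i ⊆ k j for i ≤ j) whose union is all of K. Then the assignment R ↦ (R ∩ k i)_{i ∈ ι} is a bijection between the set of valuation subrings of K and the set of families (R i)_{i ∈ ι}, where each R i is a valuation subring of the field k i, satisfying the compatibility R j ∩ k i = R i for all i ≤ j. -/
/-- Let `K` be a field and `(k i)` a monotone directed family of subfields whose union is
all of `K`. Then `R ↦ (R ∩ k i)_i` is a bijection between valuation subrings of `K` and
compatible families of valuation subrings of the `k i` (compatibility meaning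
`R j ∩ k i = R i` for `i ≤ j`). -/
theorem statement5 {K : Type*} [Field K]
    {ι : Type*} [PartialOrder ι] [IsDirected ι (· ≤ ·)] [Nonempty ι]
    (k : ι → Subfield K) (hmono : Monotone k)
    (hunion : ∀ x : K, ∃ i, x ∈ k i) :
    Set.BijOn (fun (R : ValuationSubring K) (i : ι) => R.comap (k i).subtype)
      Set.univ
      {Rf : ∀ i, ValuationSubring (k i) |
        ∀ i j (hij : i ≤ j),
          ValuationSubring.comap (K := (k i)) (Rf j) (Subfield.inclusion (hmono hij)) = Rf i} := by
  -- a key compatibility membership lemma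
  have key : ∀ (Rf : ∀ i, ValuationSubring (k i)),
      (∀ i j (hij : i ≤ j),
        ValuationSubring.comap (K := (k i)) (Rf j) (Subfield.inclusion (hmono hij)) = Rf i) →
      ∀ (x : K) (i j : ι) (hi : x ∈ k i) (hj : x ∈ k j),
        ((⟨x, hi⟩ : k i) ∈ Rf i ↔ (⟨x, hj⟩ : k j) ∈ Rf j) := by
    intro Rf hRf x i j hi hj
    obtain ⟨l, hil, hjl⟩ := directed_of (· ≤ ·) i j
    have h1 : ((⟨x, hi⟩ : k i) ∈ Rf i ↔ (⟨x, hmono hil hi⟩ : k l) ∈ Rf l) := by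
      rw [← hRf i l hil]; rfl
    have h2 : ((⟨x, hj⟩ : k j) ∈ Rf j ↔ (⟨x, hmono hjl hj⟩ : k l) ∈ Rf l) := by
      rw [← hRf j l hjl]; rfl
    rw [h1, h2]
  refine ⟨fun R _ => ?_, fun R _ S _ h => ?_, fun Rf hRf => ?_⟩
  · intro i j hij
    ext x
    rfl
  · ext x
    obtain ⟨i, hi⟩ := hunion x
    have := congrFun h i
    simp only at this
    constructor
    · intro hx
      have : (⟨x, hi⟩ : k i) ∈ R.comap (k i).subtype → (⟨x, hi⟩ : k i) ∈ S.comap (k i).subtype := by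
        rw [this]; exact id
      exact this hx
    · intro hx
      have : (⟨x, hi⟩ : k i) ∈ S.comap (k i).subtype → (⟨x, hi⟩ : k i) ∈ R.comap (k i).subtype := by
        rw [this]; exact id
      exact this hx
  · have hk := key Rf hRf
    refine ⟨{ carrier := {x : K | ∃ i, ∃ h : x ∈ k i, (⟨x, h⟩ : k i) ∈ Rf i}
              mul_mem' := ?_
              one_mem' := ?_
              add_mem' := ?_
              zero_mem' := ?_
              neg_mem' := ?_
              mem_or_inv_mem' := ?_ }, trivial, ?_⟩
    · rintro a b ⟨i, hi, hai⟩ ⟨j, hj, hbj⟩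
      obtain ⟨l, hil, hjl⟩ := directed_of (· ≤ ·) i j
      have ha : (⟨a, hmono hil hi⟩ : k l) ∈ Rf l := (hk a i l hi _).mp hai
      have hb : (⟨b, hmono hjl hj⟩ : k l) ∈ Rf l := (hk b j l hj _).mp hbj
      exact ⟨l, mul_mem (hmono hil hi) (hmono hjl hj), mul_mem ha hb⟩
    · obtain ⟨i⟩ := ‹Nonempty ι›
      exact ⟨i, one_mem _, one_mem _⟩
    · rintro a b ⟨i, hi, hai⟩ ⟨j, hj, hbj⟩
      obtain ⟨l, hil, hjl⟩ := directed_of (· ≤ ·) i j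
      have ha : (⟨a, hmono hil hi⟩ : k l) ∈ Rf l := (hk a i l hi _).mp hai
      have hb : (⟨b, hmono hjl hj⟩ : k l) ∈ Rf l := (hk b j l hj _).mp hbj
      exact ⟨l, add_mem (hmono hil hi) (hmono hjl hj), add_mem ha hb⟩
    · obtain ⟨i⟩ := ‹Nonempty ι›
      exact ⟨i, zero_mem _, zero_mem _⟩
    · rintro a ⟨i, hi, hai⟩
      exact ⟨i, neg_mem hi, neg_mem hai⟩
    · intro x
      obtain ⟨i, hi⟩ := hunion x
      rcases ValuationSubring.mem_or_inv_mem (Rf i) ⟨x, hi⟩ with h | h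
      · exact Or.inl ⟨i, hi, h⟩
      · refine Or.inr ⟨i, inv_mem hi, ?_⟩
        convert h using 2
        simp
    · funext i
      ext x
      simp only [ValuationSubring.mem_comap]
      constructor
      · rintro ⟨j, hj, hxj⟩
        exact (hk x j i hj x.2).mp hxj
      · intro hx
        exact ⟨i, x.2, hx⟩
end

section
/- Let A be a commutative ring and ϖ ∈ A, and suppose A is ϖ-adically complete and separated (i.e. A satisfies IsAdicComplete with respect to the principal ideal (ϖ)). Let B ⊆ A be a subring such that ϖ·a ∈ B for every a ∈ A (so in particular ϖ = ϖ·1 ∈ B). Then B is ϖ-adically complete and separated, i.e. B satisfies IsAdicComplete with respect to the ideal of B generated by ϖ. -/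
/-- Let `A` be a commutative ring, `ϖ ∈ A`, with `A` `ϖ`-adically complete and separated.
If `B ⊆ A` is a subring with `ϖ • A ⊆ B`, then `B` is `ϖ`-adically complete and separated. -/
theorem statement6 {A : Type*} [CommRing A] (ϖ : A)
    [IsAdicComplete (Ideal.span {ϖ}) A]
    (B : Subring A) (hB : ∀ a : A, ϖ * a ∈ B) :
    IsAdicComplete (Ideal.span {(⟨ϖ, by simpa using hB 1⟩ : B)}) B := by
  set ϖB : B := ⟨ϖ, by simpa using hB 1⟩ with hϖB
  -- membership translations
  have mem2 : ∀ (x : B) (n : ℕ), x ∈ Ideal.span {ϖB ^ n} → (x : A) ∈ Ideal.span {ϖ ^ n} := by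
    intro x n hx
    rw [Ideal.mem_span_singleton'] at hx ⊢
    obtain ⟨a, ha⟩ := hx
    exact ⟨a, by simpa [hϖB] using congrArg Subtype.val ha⟩
  have mem1 : ∀ (x : B) (n : ℕ), (x : A) ∈ Ideal.span {ϖ ^ (n + 1)} →
      x ∈ Ideal.span {ϖB ^ n} := by
    intro x n hx
    rw [Ideal.mem_span_singleton'] at hx ⊢
    obtain ⟨a, ha⟩ := hx
    refine ⟨⟨ϖ * a, hB a⟩, ?_⟩
    apply Subtype.ext
    push_cast
    rw [← ha]; ring
  have key : ∀ (x y : B) (n : ℕ),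
      (x ≡ y [SMOD ((Ideal.span {ϖB}) ^ n • ⊤ : Submodule B B)]) ↔
      x - y ∈ Ideal.span {ϖB ^ n} := by
    intro x y n
    rw [SModEq.sub_mem, smul_eq_mul, Ideal.mul_top, Ideal.span_singleton_pow]
  have keyA : ∀ (x y : A) (n : ℕ),
      (x ≡ y [SMOD ((Ideal.span {ϖ}) ^ n • ⊤ : Submodule A A)]) ↔
      x - y ∈ Ideal.span {ϖ ^ n} := by
    intro x y n
    rw [SModEq.sub_mem, smul_eq_mul, Ideal.mul_top, Ideal.span_singleton_pow]
  have hHaus : IsHausdorff (Ideal.span {ϖB}) B := by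
    constructor
    intro x hx
    have : ∀ n : ℕ, (x : A) ≡ 0 [SMOD ((Ideal.span {ϖ}) ^ n • ⊤ : Submodule A A)] := by
      intro n
      rw [keyA]
      have := (key x 0 n).mp (hx n)
      simpa using mem2 _ n (by simpa using this)
    have := IsHausdorff.haus (IsAdicComplete.toIsHausdorff (I := Ideal.span {ϖ})) (x : A) this
    exact Subtype.ext (by simpa using this)
  have hPre : IsPrecomplete (Ideal.span {ϖB}) B := by
    constructor
    intro f hf
    have hfA : ∀ {m n : ℕ}, m ≤ n → ((f m : A) ≡ (f n : A)
        [SMOD ((Ideal.span {ϖ}) ^ m • ⊤ : Submodule A A)]) := by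
      intro m n hmn
      rw [keyA]
      have := (key (f m) (f n) m).mp (hf hmn)
      simpa using mem2 _ m this
    obtain ⟨L, hL⟩ := IsPrecomplete.prec (IsAdicComplete.toIsPrecomplete (I := Ideal.span {ϖ}))
      fun {m n} h => hfA h
    have hLn : ∀ n : ℕ, L - (f n : A) ∈ Ideal.span {ϖ ^ n} := by
      intro n
      have := (keyA _ _ n).mp (hL n)
      simpa [neg_sub] using (Ideal.span {ϖ ^ n}).neg_mem this
    have hLB : L ∈ B := by
      have h1 : L - (f 1 : A) ∈ B := by
        obtain ⟨a, ha⟩ := Ideal.mem_span_singleton'.mp (hLn 1)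
        rw [← ha, pow_one, mul_comm]
        exact hB a
      have := B.add_mem h1 (f 1).2
      simpa using this
    refine ⟨⟨L, hLB⟩, fun n => ?_⟩
    rw [key]
    have h1 : (f n : B) - f (n + 1) ∈ Ideal.span {ϖB ^ n} := by
      have := (key (f n) (f (n+1)) n).mp (hf (Nat.le_succ n))
      exact this
    have h2 : f (n + 1) - (⟨L, hLB⟩ : B) ∈ Ideal.span {ϖB ^ n} := by
      apply mem1
      have := hLn (n + 1)
      simpa [neg_sub] using (Ideal.span {ϖ ^ (n+1)}).neg_mem this
    have := (Ideal.span {ϖB ^ n}).add_mem h1 h2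
    simpa using this
  exact { toIsHausdorff := hHaus, toIsPrecomplete := hPre }
end

section
/- Let A be a commutative ring, ϖ ∈ A, and let π : A → A₀ := A ⧸ ((ϖ) : Ideal A).radical be the quotient map by the radical of the principal ideal generated by ϖ (so A₀ is the reduced quotient (A/ϖA)_red). Let B₀ be a subring of A₀ and let B = π⁻¹(B₀) be its preimage subring in A. Then: (1) the radical in B of the ideal of B generated by ϖ equals the kernel of the restriction π|_B : B → B₀ (equivalently, equals (the radical of (ϖ) in A) viewed as a subset of B); and (2) π induces a ring isomorphism B ⧸ ((ϖ) : Ideal B).radical ≅ B₀. -/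
/-- Let `A` be a commutative ring, `ϖ ∈ A`, `π : A → A₀ = A ⧸ (ϖ).radical` the quotient
map, `B₀` a subring of `A₀`, and `B = π⁻¹(B₀)`. Then (1) the radical of the ideal of `B`
generated by `ϖ` consists exactly of the elements of `B` killed by `π` (equivalently, it
is the radical of `(ϖ)` in `A` viewed inside `B`), and (2) `π` induces a ring isomorphism
`B ⧸ (ϖ·B).radical ≅ B₀`. -/
theorem statement7 {A : Type*} [CommRing A] (ϖ : A)
    (B₀ : Subring (A ⧸ (Ideal.span {ϖ} : Ideal A).radical))
    (B : Subring A)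
    (hB : B = B₀.comap (Ideal.Quotient.mk (Ideal.span {ϖ} : Ideal A).radical))
    (ϖB : B) (hϖB : (ϖB : A) = ϖ) :
    (∀ b : B, b ∈ (Ideal.span {ϖB} : Ideal B).radical ↔
        Ideal.Quotient.mk (Ideal.span {ϖ} : Ideal A).radical (b : A) = 0) ∧
      ∃ e : (B ⧸ (Ideal.span {ϖB} : Ideal B).radical) ≃+* B₀,
        ∀ b : B,
          ((e (Ideal.Quotient.mk (Ideal.span {ϖB} : Ideal B).radical b) :
              A ⧸ (Ideal.span {ϖ} : Ideal A).radical)) =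
            Ideal.Quotient.mk (Ideal.span {ϖ} : Ideal A).radical (b : A) := by
  have hBmem : ∀ x : A, x ∈ B ↔
      Ideal.Quotient.mk (Ideal.span {ϖ} : Ideal A).radical x ∈ B₀ := by
    intro x; rw [hB]; rfl
  have key : ∀ b : B, b ∈ (Ideal.span {ϖB} : Ideal B).radical ↔
      Ideal.Quotient.mk (Ideal.span {ϖ} : Ideal A).radical (b : A) = 0 := by
    intro b
    constructor
    · rintro ⟨n, hn⟩
      rw [Ideal.mem_span_singleton] at hn
      obtain ⟨c, hc⟩ := hn
      have hc' : (b : A) ^ n = ϖ * (c : A) := by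
        have := congrArg (Subtype.val) hc
        push_cast at this
        rw [hϖB] at this
        exact this
      have hb : (b : A) ∈ (Ideal.span {ϖ} : Ideal A).radical :=
        ⟨n, hc' ▸ Ideal.mem_span_singleton.mpr ⟨(c : A), rfl⟩⟩
      exact Ideal.Quotient.eq_zero_iff_mem.mpr hb
    · intro h
      have hb : (b : A) ∈ (Ideal.span {ϖ} : Ideal A).radical :=
        Ideal.Quotient.eq_zero_iff_mem.mp h
      obtain ⟨n, hn⟩ := hb
      rw [Ideal.mem_span_singleton] at hn
      obtain ⟨a, ha⟩ := hn
      have hab : a * (b : A) ∈ B := by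
        rw [hBmem, map_mul, h, mul_zero]
        exact B₀.zero_mem
      refine ⟨n + 1, Ideal.mem_span_singleton.mpr ⟨⟨a * (b : A), hab⟩, ?_⟩⟩
      apply Subtype.ext
      push_cast
      rw [hϖB, pow_succ, ha]
      ring
  refine ⟨key, ?_⟩
  have hmem : ∀ b : B, Ideal.Quotient.mk (Ideal.span {ϖ} : Ideal A).radical (b : A) ∈ B₀ := by
    intro b
    exact (hBmem b).mp b.2
  let f : B →+* B₀ :=
    ((Ideal.Quotient.mk (Ideal.span {ϖ} : Ideal A).radical).comp B.subtype).codRestrict B₀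
      (fun b => hmem b)
  have hf : ∀ b : B, (f b : A ⧸ (Ideal.span {ϖ} : Ideal A).radical) =
      Ideal.Quotient.mk (Ideal.span {ϖ} : Ideal A).radical (b : A) := fun b => rfl
  have hsurj : Function.Surjective f := by
    rintro ⟨y, hy⟩
    obtain ⟨a, ha⟩ := Ideal.Quotient.mk_surjective y
    have haB : a ∈ B := (hBmem a).mpr (by rw [ha]; exact hy)
    exact ⟨⟨a, haB⟩, Subtype.ext ha⟩
  have hker : (Ideal.span {ϖB} : Ideal B).radical = RingHom.ker f := by
    ext b
    rw [RingHom.mem_ker, key b]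
    constructor
    · intro h; exact Subtype.ext h
    · intro h; exact congrArg Subtype.val h
  refine ⟨(Ideal.quotEquivOfEq hker).trans (RingHom.quotientKerEquivOfSurjective hsurj), ?_⟩
  intro b
  simp only [RingEquiv.coe_trans, Function.comp_apply, Ideal.quotEquivOfEq_mk]
  have h2 : (RingHom.quotientKerEquivOfSurjective hsurj)
      (Ideal.Quotient.mk (RingHom.ker f) b) = f b := by
    simp [RingHom.quotientKerEquivOfSurjective]
  rw [h2, hf]
end

section
/- Let A be a commutative ring and ϖ ∈ A with A ϖ-adically complete and separated (IsAdicComplete with respect to (ϖ)). Let π : A → A₀ := A ⧸ ((ϖ) : Ideal A).radical be the quotient map, let B₀ be a subring of A₀, and let h ∈ B₀ be an element that is a unit of A₀ and satisfies: for every z ∈ A₀ there exists m ≥ 0 with h^m · z ∈ B₀ (i.e. A₀ = B₀[h⁻¹]). Let B = π⁻¹(B₀) and let h̃ ∈ B be any element with π(h̃) = h. Then h̃ is a unit of A, for every a ∈ A there exists m ≥ 0 with h̃^m · a ∈ B, and consequently the subring of A generated by B ∪ {h̃⁻¹} is all of A. -/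
/-- Let `A` be `ϖ`-adically complete and separated, `π : A → A₀ = A ⧸ (ϖ).radical`,
`B₀ ⊆ A₀` a subring, `h ∈ B₀` a unit of `A₀` with `A₀ = B₀[h⁻¹]`, `B = π⁻¹(B₀)` and
`h̃ ∈ B` a lift of `h`. Then `h̃` is a unit of `A`, every `a : A` satisfies
`h̃^m · a ∈ B` for some `m`, and the subring of `A` generated by `B` and `h̃⁻¹`
is all of `A`. -/
theorem statement9 {A : Type*} [CommRing A] (ϖ : A)
    [IsAdicComplete (Ideal.span {ϖ}) A]
    (B₀ : Subring (A ⧸ (Ideal.span {ϖ} : Ideal A).radical))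
    (h : A ⧸ (Ideal.span {ϖ} : Ideal A).radical)
    (hhB₀ : h ∈ B₀) (hunit : IsUnit h)
    (hgen : ∀ z : A ⧸ (Ideal.span {ϖ} : Ideal A).radical, ∃ m : ℕ, h ^ m * z ∈ B₀)
    (B : Subring A)
    (hB : B = B₀.comap (Ideal.Quotient.mk (Ideal.span {ϖ} : Ideal A).radical))
    (htilde : A) (ht_mem : htilde ∈ B)
    (ht_lift : Ideal.Quotient.mk (Ideal.span {ϖ} : Ideal A).radical htilde = h) :
    IsUnit htilde ∧ (∀ a : A, ∃ m : ℕ, htilde ^ m * a ∈ B) ∧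
      ∀ v : A, htilde * v = 1 → Subring.closure ((B : Set A) ∪ {v}) = ⊤ := by
  set I : Ideal A := (Ideal.span {ϖ} : Ideal A).radical
  -- radical of (ϖ) is contained in jacobson ⊥
  have hIjac : I ≤ (⊥ : Ideal A).jacobson := by
    calc I ≤ (Ideal.span {ϖ}).jacobson := Ideal.radical_le_jacobson
    _ ≤ ((⊥ : Ideal A).jacobson).jacobson :=
        Ideal.jacobson_mono (IsAdicComplete.le_jacobson_bot _)
    _ = (⊥ : Ideal A).jacobson := Ideal.jacobson_idem
  -- htilde is a unit
  have hu : IsUnit htilde := by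
    obtain ⟨u, hu⟩ := hunit
    obtain ⟨w, hw⟩ := Ideal.Quotient.mk_surjective (I := I) (↑u⁻¹ : _)
    have : htilde * w - 1 ∈ I := by
      rw [← Ideal.Quotient.eq_zero_iff_mem]
      simp [map_sub, map_mul, hw, ht_lift, ← hu]
      rw [show Ideal.Quotient.mk I htilde = ↑u from ht_lift.trans hu.symm, Units.mul_inv, sub_self]
    have hw1 : IsUnit (htilde * w) :=
      Ideal.isUnit_of_sub_one_mem_jacobson_bot _ (hIjac this)
    exact isUnit_of_mul_isUnit_left hw1
  refine ⟨hu, ?_, ?_⟩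
  · intro a
    obtain ⟨m, hm⟩ := hgen (Ideal.Quotient.mk I a)
    exact ⟨m, by rw [hB]; simpa [map_mul, map_pow, ht_lift] using hm⟩
  · intro v hv
    ext a
    simp only [Subring.mem_top, iff_true]
    obtain ⟨m, hm⟩ := hgen (Ideal.Quotient.mk I a)
    have hmem : htilde ^ m * a ∈ B := by
      rw [hB]; simpa [map_mul, map_pow, ht_lift] using hm
    have key : a = v ^ m * (htilde ^ m * a) := by
      have : (htilde * v) ^ m = 1 := by rw [hv, one_pow]
      calc a = (htilde * v) ^ m * a := by rw [this, one_mul]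
      _ = v ^ m * (htilde ^ m * a) := by ring
    rw [key]
    exact (Subring.closure ((B : Set A) ∪ {v})).mul_mem
      ((Subring.closure ((B : Set A) ∪ {v})).pow_mem
        (Subring.subset_closure (Or.inr rfl)) m)
      (Subring.subset_closure (Or.inl hmem))
end

section
/- Let X̄ be a spectral space, U ⊆ X̄ a quasi-compact open subset with open inclusion j : U → X̄, and F a sheaf on U (with values in types or in abelian groups). Let x ∈ X̄ and x₀ ∈ U be such that x ∈ closure{x₀} and such that every y ∈ U with x ∈ closure{y} satisfies x₀ ∈ closure{y} (x₀ is a minimal generalization of x inside U). Then the canonical specialization map between stalks of the pushforward sheaf, (j_*F)_x → (j_*F)_{x₀}, induced by the specialization x₀ ⤳ x, is an isomorphism; in particular the stalk (j_*F)_x is isomorphic to the stalk F_{x₀}. -/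
open TopologicalSpace CategoryTheory AlgebraicGeometry

universe u

/-- In a spectral space, a point in the closure of a set `A \ B` with `A` quasi-compact
open and `B` open admits a generalization lying in `A \ B`. -/
lemma exists_gen_of_mem_closure_diff {α : Type u} [TopologicalSpace α]
    (hX : IsSpectralSpace α) {A B : Set α} (hAc : IsCompact A) (hAo : IsOpen A)
    (hBo : IsOpen B) {x : α} (hx : x ∈ closure (A \ B)) :
    ∃ y ∈ A \ B, x ∈ closure ({y} : Set α) := by
  obtain ⟨hcomp, _ht0, hsob, hbasis, hinter⟩ := hX
  set K : Set α := A \ B with hK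
  have hKN : ∀ N : Set α, IsCompact N → IsOpen N → IsCompact (K ∩ N) := by
    intro N hNc hNo
    have : K ∩ N = (A ∩ N) ∩ Bᶜ := by
      ext z; simp [hK, Set.diff_eq, Set.mem_inter_iff]; tauto
    rw [this]
    exact (hinter A N hAc hAo hNc hNo).inter_right hBo.isClosed_compl
  have hKNne : ∀ N : Set α, IsOpen N → x ∈ N → (K ∩ N).Nonempty := by
    intro N hNo hxN
    obtain ⟨z, hz⟩ := mem_closure_iff.mp hx N hNo hxN
    exact ⟨z, hz.2, hz.1⟩
  set S : Set (Set α) :=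
    {C | IsClosed C ∧ ∀ N : Set α, IsCompact N → IsOpen N → x ∈ N → (C ∩ (K ∩ N)).Nonempty}
    with hS
  have hunivS : (Set.univ : Set α) ∈ S := by
    refine ⟨isClosed_univ, fun N hNc hNo hxN => ?_⟩
    simpa using hKNne N hNo hxN
  -- Zorn's lemma: a minimal element of S
  obtain ⟨C₀, hC₀min⟩ : ∃ m, Minimal (· ∈ S) m := by
    apply zorn_superset
    intro c hcS hchain
    rcases c.eq_empty_or_nonempty with rfl | hcne
    · exact ⟨Set.univ, hunivS, by simp⟩
    refine ⟨⋂₀ c, ⟨isClosed_sInter fun C hC => (hcS hC).1, ?_⟩, fun s hs => Set.sInter_subset_of_mem hs⟩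
    intro N hNc hNo hxN
    have h1 : (K ∩ N ∩ ⋂ C : c, (C : Set α)).Nonempty := by
      apply (hKN N hNc hNo).inter_iInter_nonempty (fun C : c => (C : Set α))
        (fun C => (hcS C.2).1)
      intro u
      rcases u.eq_empty_or_nonempty with rfl | hune
      · simpa using hKNne N hNo hxN
      · obtain ⟨m, hmu, hmmin⟩ := u.exists_minimal hune
        obtain ⟨z, hz1, hz2⟩ := (hcS m.2).2 N hNc hNo hxN
        refine ⟨z, hz2, ?_⟩
        simp only [Set.mem_iInter]
        intro C hCu
        rcases eq_or_ne C m with rfl | hne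
        · exact hz1
        · rcases hchain.total C.2 m.2 with h | h
          · exact absurd (lt_of_le_of_ne h (by simpa [Subtype.ext_iff] using hne)) (fun hlt => hlt.not_subset (hmmin hCu hlt.subset))
          · exact h hz1
    obtain ⟨z, hz1, hz2⟩ := h1
    refine ⟨z, ?_, hz1⟩
    rw [Set.mem_sInter]
    intro C hCc
    exact (Set.mem_iInter.mp hz2) ⟨C, hCc⟩
  obtain ⟨⟨hC₀cl, hC₀meet⟩, hmin⟩ := hC₀min
  haveI := hcomp
  -- x ∈ C₀
  have hxC₀ : x ∈ C₀ := by
    by_contra hxn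
    obtain ⟨N, ⟨hNc, hNo⟩, hxN, hNsub⟩ :=
      hbasis.exists_subset_of_mem_open (by simpa using hxn) hC₀cl.isOpen_compl
    obtain ⟨z, hz1, hz2⟩ := hC₀meet N hNc hNo hxN
    exact (hNsub hz2.2) hz1
  -- C₀ ⊆ closure K
  have hC₀sub : C₀ ⊆ closure K := by
    have hmem : C₀ ∩ closure K ∈ S := by
      refine ⟨hC₀cl.inter isClosed_closure, fun N hNc hNo hxN => ?_⟩
      obtain ⟨z, hz1, hz2⟩ := hC₀meet N hNc hNo hxN
      exact ⟨z, ⟨hz1, subset_closure hz2.1⟩, hz2⟩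
    have := hmin hmem Set.inter_subset_left
    intro z hz
    exact (this.antisymm Set.inter_subset_left ▸ hz : z ∈ C₀ ∩ closure K).2
  -- C₀ is irreducible
  have hC₀ne : C₀.Nonempty := by
    obtain ⟨z, hz, _⟩ := hC₀meet Set.univ isCompact_univ isOpen_univ (Set.mem_univ x)
    exact ⟨z, hz⟩
  have hirr : IsIrreducible C₀ := by
    refine ⟨hC₀ne, fun u v hu hv hCu hCv => ?_⟩
    have key : ∀ w : Set α, IsOpen w → (C₀ ∩ w).Nonempty →
        ∃ N : Set α, IsCompact N ∧ IsOpen N ∧ x ∈ N ∧ (C₀ \ w) ∩ (K ∩ N) = ∅ := by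
      intro w hw hCw
      by_contra hcon
      push_neg at hcon
      have hmem : C₀ \ w ∈ S := by
        refine ⟨hC₀cl.sdiff hw, fun N hNc hNo hxN => ?_⟩
        exact hcon N hNc hNo hxN
      have := hmin hmem Set.diff_subset
      obtain ⟨z, hz1, hz2⟩ := hCw
      exact ((this.antisymm Set.diff_subset ▸ hz1 : z ∈ C₀ \ w)).2 hz2
    obtain ⟨N₁, hN₁c, hN₁o, hxN₁, h₁⟩ := key u hu hCu
    obtain ⟨N₂, hN₂c, hN₂o, hxN₂, h₂⟩ := key v hv hCv
    obtain ⟨z, hz1, hz2⟩ := hC₀meet (N₁ ∩ N₂) (hinter _ _ hN₁c hN₁o hN₂c hN₂o)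
      (hN₁o.inter hN₂o) ⟨hxN₁, hxN₂⟩
    have hzu : z ∈ u := by
      by_contra hzu
      have hmem : z ∈ (C₀ \ u) ∩ (K ∩ N₁) := ⟨⟨hz1, hzu⟩, hz2.1, hz2.2.1⟩
      rw [h₁] at hmem
      exact hmem
    have hzv : z ∈ v := by
      by_contra hzv
      have hmem : z ∈ (C₀ \ v) ∩ (K ∩ N₂) := ⟨⟨hz1, hzv⟩, hz2.1, hz2.2.2⟩
      rw [h₂] at hmem
      exact hmem
    exact ⟨z, hz1, hzu, hzv⟩
  -- generic point
  obtain ⟨y, hy⟩ := hsob.sober hirr hC₀cl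
  have hyC₀ : y ∈ C₀ := hy ▸ subset_closure rfl
  -- y ∈ A
  have hyA : y ∈ A := by
    obtain ⟨z, hz1, hz2⟩ := hC₀meet Set.univ isCompact_univ isOpen_univ (Set.mem_univ x)
    have hzA : z ∈ A := hz2.1.1
    have : z ∈ closure ({y} : Set α) := hy.symm ▸ hz1
    obtain ⟨w, hw1, hw2⟩ := mem_closure_iff.mp this A hAo hzA
    exact hw2 ▸ hw1
  -- y ∉ B
  have hyB : y ∉ B := by
    intro hyB
    have : y ∈ closure K := hC₀sub hyC₀
    have hsub : closure K ⊆ Bᶜ :=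
      closure_minimal (fun z hz => hz.2) hBo.isClosed_compl
    exact hsub this hyB
  exact ⟨y, ⟨hyA, hyB⟩, hy.symm ▸ hxC₀⟩

lemma spec_germ {Y : TopCat.{u}} (Fp : TopCat.Presheaf (Type u) Y) {V : Opens Y} {y x : Y}
    (h : x ⤳ y) (hy : y ∈ V) (s : Fp.obj (Opposite.op V)) :
    Fp.stalkSpecializes h (Fp.germ V y hy s) = Fp.germ V x (h.mem_open V.isOpen hy) s :=
  by rw [← Fp.germ_stalkSpecializes hy h]; rfl

lemma res_res {Y : TopCat.{u}} (Fp : TopCat.Presheaf (Type u) Y) {a b c : Opens Y}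
    (l : c ⟶ a) (k : c ⟶ b) (i : b ⟶ a) (s : Fp.obj (Opposite.op a)) :
    Fp.map l.op s = Fp.map k.op (Fp.map i.op s) := by
  have h : l = k ≫ i := Subsingleton.elim _ _
  rw [h, op_comp, Fp.map_comp]
  rfl

/-- Let `X̄` be a spectral space, `U` a quasi-compact open with open inclusion
`j : U → X̄`, and `F` a sheaf of types on `U`. If `x₀ ∈ U` is a minimal generalization
of `x ∈ X̄` inside `U`, then the canonical specialization map of stalks
`(j_*F)_x → (j_*F)_{x₀}` is an isomorphism; in particular `(j_*F)_x ≅ F_{x₀}`. -/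
theorem statement11 (X : TopCat.{u}) (hX : IsSpectralSpace X)
    (U : Opens X) (hU : IsCompact (U : Set X))
    (F : TopCat.Sheaf (Type u) ((Opens.toTopCat X).obj U))
    (x : X) (x₀ : (Opens.toTopCat X).obj U)
    (hx : x ∈ closure ({(x₀.1 : X)} : Set X))
    (hmin : ∀ y : (Opens.toTopCat X).obj U,
      x ∈ closure ({(y.1 : X)} : Set X) → (x₀.1 : X) ∈ closure ({(y.1 : X)} : Set X)) :
    IsIso (TopCat.Presheaf.stalkSpecializes (U.inclusion' _* F.1)
        (specializes_iff_mem_closure.mpr hx)) ∧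
      Nonempty (TopCat.Presheaf.stalk (U.inclusion' _* F.1) x ≅ TopCat.Presheaf.stalk F.1 x₀) := by
  classical
  set G := U.inclusion' _* F.1 with hGdef
  set P := Opens.map U.inclusion' with hPdef
  have hspec : (x₀.1 : X) ⤳ x := specializes_iff_mem_closure.mpr hx
  -- Key topological input
  have hkey : ∀ W : Opens X, (x₀.1 : X) ∈ W → x ∉ closure ((U : Set X) \ (W : Set X)) := by
    intro W hW hxcl
    have hmemWU : (x₀.1 : X) ∈ (W : Set X) ∩ (U : Set X) := ⟨hW, x₀.2⟩
    obtain ⟨W', ⟨hW'c, hW'o⟩, hx₀W', hW'sub⟩ :=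
      hX.2.2.2.1.exists_subset_of_mem_open hmemWU (W.isOpen.inter U.isOpen)
    have hxcl' : x ∈ closure ((U : Set X) \ W') :=
      closure_mono (Set.diff_subset_diff_right (hW'sub.trans Set.inter_subset_left)) hxcl
    obtain ⟨y, hyK, hyx⟩ := exists_gen_of_mem_closure_diff hX hU U.isOpen hW'o hxcl'
    have hmy := hmin ⟨y, hyK.1⟩ hyx
    obtain ⟨z, hz1, hz2⟩ := mem_closure_iff.mp hmy W' hW'o hx₀W'
    have hzy : z = y := hz2
    exact hyK.2 (hzy ▸ hz1)
  let VV : Opens X → Opens X := fun W =>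
    ⟨(closure ((U : Set X) \ (W : Set X)))ᶜ, isClosed_closure.isOpen_compl⟩
  have hxVV : ∀ W : Opens X, (x₀.1 : X) ∈ W → x ∈ VV W := fun W hW => hkey W hW
  have hVVsub : ∀ W : Opens X, P.obj (VV W) ≤ P.obj W := by
    intro W z hz
    by_contra hzW
    exact hz (subset_closure ⟨z.2, hzW⟩)
  have hgen2 : ∀ W : Opens X, x ∈ W → (x₀.1 : X) ∈ W := fun W hxW =>
    hspec.mem_open W.isOpen hxW
  have hbij : Function.Bijective (G.stalkSpecializes hspec) := by
    constructor
    · intro a b hab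
      obtain ⟨V₁, hxV₁, s₁, rfl⟩ := G.germ_exist (x := x) a
      obtain ⟨V₂, hxV₂, s₂, rfl⟩ := G.germ_exist (x := x) b
      have hab' : G.germ V₁ x₀.1 (hspec.mem_open V₁.isOpen hxV₁) s₁ =
          G.germ V₂ x₀.1 (hspec.mem_open V₂.isOpen hxV₂) s₂ :=
        (spec_germ G hspec hxV₁ s₁).symm.trans (hab.trans (spec_germ G hspec hxV₂ s₂))
      obtain ⟨W, hx₀W, i₁, i₂, he⟩ := G.germ_eq x₀.1 _ _ s₁ s₂ hab'
      have hxW₀ : x ∈ V₁ ⊓ V₂ ⊓ VV W := ⟨⟨hxV₁, hxV₂⟩, hxVV W hx₀W⟩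
      apply TopCat.Presheaf.germ_ext G (V₁ ⊓ V₂ ⊓ VV W) hxW₀
        (homOfLE (le_trans inf_le_left inf_le_left))
        (homOfLE (le_trans inf_le_left inf_le_right))
      have hk : P.obj (V₁ ⊓ V₂ ⊓ VV W) ≤ P.obj W := fun z hz => hVVsub W hz.2
      show F.1.map (P.map (homOfLE (le_trans inf_le_left inf_le_left))).op s₁ =
        F.1.map (P.map (homOfLE (le_trans inf_le_left inf_le_right))).op s₂
      calc F.1.map (P.map (homOfLE (le_trans inf_le_left inf_le_left))).op s₁
          = F.1.map (homOfLE hk).op (F.1.map (P.map i₁).op s₁) := res_res _ _ _ _ _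
        _ = F.1.map (homOfLE hk).op (F.1.map (P.map i₂).op s₂) := by
            rw [show F.1.map (P.map i₁).op s₁ = F.1.map (P.map i₂).op s₂ from he]
        _ = F.1.map (P.map (homOfLE (le_trans inf_le_left inf_le_right))).op s₂ :=
            (res_res _ _ _ _ _).symm
    · intro t
      obtain ⟨W, hx₀W, s, rfl⟩ := G.germ_exist (x := x₀.1) t
      have hxV : x ∈ VV W := hxVV W hx₀W
      refine ⟨G.germ (VV W) x hxV (F.1.map (homOfLE (hVVsub W)).op s), ?_⟩
      refine (spec_germ G hspec hxV _).trans ?_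
      apply TopCat.Presheaf.germ_ext G (W ⊓ VV W) ⟨hx₀W, hgen2 _ hxV⟩
        (homOfLE inf_le_right) (homOfLE inf_le_left)
      show F.1.map (P.map (homOfLE inf_le_right)).op (F.1.map (homOfLE (hVVsub W)).op s) =
        F.1.map (P.map (homOfLE inf_le_left)).op s
      exact (res_res _ _ _ _ _).symm
  have hiso : IsIso (G.stalkSpecializes hspec) := (CategoryTheory.isIso_iff_bijective _).mpr hbij
  refine ⟨hiso, ⟨?_⟩⟩
  haveI := hiso
  haveI : IsIso (TopCat.Presheaf.stalkPushforward (Type u) U.inclusion' F.1 x₀) :=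
    TopCat.Presheaf.stalkPushforward.stalkPushforward_iso_of_isInducing (Type u)
      U.isOpenEmbedding.toIsInducing F.1 x₀
  exact asIso (G.stalkSpecializes hspec) ≪≫
    @asIso _ _ _ _ _ this
end
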